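/- Let D be a triangulated category with a t-structure 𝒰 = (U^{≤0}, U^{≥0}), let m be a positive integer, and set m-ℋ = U^{≥-(m-1)} ∩ U^{≤0}. Then the assignments φ(V^{≤0}, V^{≥0}) = (V^{≤0} ∩ U^{≥-(m-1)}, V^{≥1} ∩ U^{≤0}) and ψ(𝒯,ℱ) = (U^{≤-m} * 𝒯, ℱ[1] * U^{≥0}) are mutually inverse, order preserving bijections between the poset of t-structures (V^{≤0}, V^{≥0}) on D with U^{≤-m} ⊆ V^{≤0} ⊆ U^{≤0} and the poset of s-torsion pairs in m-ℋ. -/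

import Mathlib

open CategoryTheory Category Limits Pretriangulated

universe v u

variable (D : Type u) [Category.{v} D] [Preadditive D] [HasZeroObject D]
  [HasShift D ℤ] [∀ n : ℤ, (shiftFunctor D n).Additive]
  [Pretriangulated D] [HasBinaryBiproducts D]

/-- `shiftSet D S n` is the full subcategory `S[n]`: objects isomorphic to `X⟦n⟧`
with `X ∈ S`. -/
def shiftSet (S : Set D) (n : ℤ) : Set D :=
  {A | ∃ B ∈ S, Nonempty (A ≅ B⟦n⟧)}

/-- `starSet D X Y` is `X * Y`: the class of objects `A` admitting a distinguished
triangle `X → A → Y → X[1]` with `X ∈ 𝒳` and `Y ∈ 𝒴`. -/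
def starSet (X Y : Set D) : Set D :=
  {A | ∃ (B C : D) (f : B ⟶ A) (g : A ⟶ C) (h : C ⟶ B⟦(1 : ℤ)⟧),
    B ∈ X ∧ C ∈ Y ∧ Triangle.mk f g h ∈ distTriang D}

/-- `Hom(X, Y) = 0`: every morphism from an object of `X` to an object of `Y` is zero. -/
def homZero (X Y : Set D) : Prop :=
  ∀ A ∈ X, ∀ B ∈ Y, ∀ f : A ⟶ B, f = 0

/-- a class of objects closed under isomorphisms -/
def isoClosed (S : Set D) : Prop :=
  ∀ ⦃A B : D⦄, (A ≅ B) → A ∈ S → B ∈ S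

/-- an additive full subcategory (closed under isomorphisms) which is closed under
direct summands -/
structure AdditiveClosed (S : Set D) : Prop where
  iso : isoClosed D S
  zero : ∀ Z : D, IsZero Z → Z ∈ S
  sum : ∀ A ∈ S, ∀ B ∈ S, (A ⊞ B) ∈ S
  summand : ∀ A ∈ S, ∀ (X : D) (i : X ⟶ A) (p : A ⟶ X), i ≫ p = 𝟙 X → X ∈ S

/-- a torsion pair `(U, V)` in the triangulated category `D` -/
structure IsTorsionPair (U V : Set D) : Prop where
  addU : AdditiveClosed D U
  addV : AdditiveClosed D V
  hom_zero : homZero D U V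
  cover : ∀ A : D, A ∈ starSet D U V

/-- `t₁ ≼ t₂` for torsion pairs in a triangulated category: `U₁ ⊆ U₂` and `U₁[1] ⊆ U₂`. -/
def torsLE (U₁ U₂ : Set D) : Prop :=
  U₁ ⊆ U₂ ∧ shiftSet D U₁ 1 ⊆ U₂

/-- a torsion pair `(T, F)` in an (extension-closed) full subcategory `H` of `D`:
`T` and `F` are additive subcategories of `H` closed under direct summands,
`Hom(T, F) = 0`, and every object of `H` admits a distinguished triangle
`T → X → F → T[1]` with `T ∈ 𝒯`, `F ∈ ℱ`. -/
structure IsTorsionPairIn (H T F : Set D) : Prop where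
  subT : T ⊆ H
  subF : F ⊆ H
  isoT : ∀ ⦃A B : D⦄, (A ≅ B) → A ∈ T → B ∈ H → B ∈ T
  isoF : ∀ ⦃A B : D⦄, (A ≅ B) → A ∈ F → B ∈ H → B ∈ F
  zeroT : ∀ Z : D, IsZero Z → Z ∈ H → Z ∈ T
  zeroF : ∀ Z : D, IsZero Z → Z ∈ H → Z ∈ F
  sumT : ∀ A ∈ T, ∀ B ∈ T, (A ⊞ B) ∈ T
  sumF : ∀ A ∈ F, ∀ B ∈ F, (A ⊞ B) ∈ F
  summandT : ∀ A ∈ T, ∀ (X : D) (i : X ⟶ A) (p : A ⟶ X), i ≫ p = 𝟙 X → X ∈ H → X ∈ T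
  summandF : ∀ A ∈ F, ∀ (X : D) (i : X ⟶ A) (p : A ⟶ X), i ≫ p = 𝟙 X → X ∈ H → X ∈ F
  hom_zero : homZero D T F
  cover : ∀ A ∈ H, A ∈ starSet D T F

/-- an `s`-torsion pair in `H`: a torsion pair with moreover `Hom(T, F[-1]) = 0`. -/
structure IsSTorsionPairIn (H T F : Set D) extends IsTorsionPairIn D H T F : Prop where
  neg_hom_zero : ∀ A ∈ T, ∀ B ∈ F, ∀ f : A ⟶ B⟦(-1 : ℤ)⟧, f = 0

/-- the relation `≼` for torsion pairs in a subcategory `H`: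
`Hom(T, F') = 0` and `Hom(T, F'[-1]) = 0`. -/
def torsLEIn (T F' : Set D) : Prop :=
  homZero D T F' ∧ homZero D T (shiftSet D F' (-1))

/-- a `t`-structure `(L, G) = (S^{≤0}, S^{≥0})` on a triangulated (full) subcategory `S`
of `D` (take `S = Set.univ` for a `t`-structure on `D` itself). -/
structure IsTStructureOn (S L G : Set D) : Prop where
  subL : L ⊆ S
  subG : G ⊆ S
  isoL : ∀ ⦃A B : D⦄, (A ≅ B) → A ∈ L → B ∈ S → B ∈ L
  isoG : ∀ ⦃A B : D⦄, (A ≅ B) → A ∈ G → B ∈ S → B ∈ G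
  hom_zero : homZero D L (shiftSet D G (-1))
  cover : ∀ A ∈ S, A ∈ starSet D L (shiftSet D G (-1))
  shiftL : L ⊆ shiftSet D L (-1)
  shiftG : shiftSet D G (-1) ⊆ G

/-- a `t`-structure `(L, G) = (D^{≤0}, D^{≥0})` on `D`. -/
def IsTStructure (L G : Set D) : Prop := IsTStructureOn D Set.univ L G

/-- a triangulated full subcategory of `D`. -/
structure IsTriangulatedSub (S : Set D) : Prop where
  iso : isoClosed D S
  zero : ∀ Z : D, IsZero Z → Z ∈ S
  shift : ∀ (n : ℤ), ∀ A ∈ S, A⟦n⟧ ∈ S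
  ext₂ : ∀ (T : Triangle D), (T ∈ distTriang D) → T.obj₁ ∈ S → T.obj₃ ∈ S → T.obj₂ ∈ S

/-- an `m`-extended heart on `D`: a full subcategory of the form
`V^{≥ -(m-1)} ∩ V^{≤ 0}` for some `t`-structure `(V^{≤0}, V^{≥0})` on `D`. -/
def IsExtendedHeart (m : ℤ) (E : Set D) : Prop :=
  ∃ L G : Set D, IsTStructure D L G ∧ E = shiftSet D G (m - 1) ∩ L

/-- the relation `E₁ ≤ E₂` for `m`-extended hearts:
`E₁ ⊆ E₂[m] * E₂` and `E₂ ⊆ E₁ * E₁[-m]`. -/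
def extHeartLE (m : ℤ) (E₁ E₂ : Set D) : Prop :=
  E₁ ⊆ starSet D (shiftSet D E₂ m) E₂ ∧ E₂ ⊆ starSet D E₁ (shiftSet D E₁ (-m))

/-!
For `φ`, the torsion triangle of `X ∈ m-ℋ` is its `𝒱`-truncation triangle `V^{≤0} → X → V^{≥1}`,
which stays inside `m-ℋ` because `U^{≤-m} ⊆ V^{≤0} ⊆ U^{≤0}`.

For `ψ`, the class `U^{≤-m} * 𝒯` is identified with `U^{≤0} ∩ ⊥ℱ`. It is closed under `[1]`
because `Hom(𝒯, ℱ[-1]) = 0`, and every object `A` sits in a triangle `K → A → Q` with `K` in it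
and `Q` in its right orthogonal: if `X → A` is the `U^{≤0}`-truncation, `X → X'` the
`U^{≥1-m}`-truncation of `X` and `X' → F'` the torsion-free quotient of `X' ∈ m-ℋ`, then `K` is the
fibre of `X → F'`. All verifications are vanishing statements for Hom groups along distinguished
triangles, so the octahedral axiom is never used. The right orthogonal is `ℱ * U^{≥1}`, that is
`(ℱ[1] * U^{≥0})[-1]`. Intersecting with `U^{≥1-m}`, resp. `U^{≤0}`, gives back `𝒯`, resp. `ℱ`,
because a triangle whose first, resp. second, morphism vanishes splits.
-/

open Triangulated

section ShiftSet

variable {C : Type*} [Category C] [HasShift C ℤ]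

lemma shift_mem_shiftSet {S : Set C} {A : C} (hA : A ∈ S) (n : ℤ) : A⟦n⟧ ∈ shiftSet C S n :=
  ⟨A, hA, ⟨Iso.refl _⟩⟩

lemma shiftSet_isoClosed (S : Set C) (n : ℤ) : isoClosed C (shiftSet C S n) := by
  rintro A B e ⟨A₀, hA₀, ⟨e₀⟩⟩
  exact ⟨A₀, hA₀, ⟨e.symm ≪≫ e₀⟩⟩

lemma mem_shiftSet_iff {S : Set C} (hS : isoClosed C S) {A : C} {n : ℤ} :
    A ∈ shiftSet C S n ↔ A⟦-n⟧ ∈ S := by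
  refine ⟨fun ⟨B, hB, ⟨e⟩⟩ => hS ?_ hB, fun h => ⟨_, h, ⟨?_⟩⟩⟩
  · exact ((shiftFunctor C (-n)).mapIso e ≪≫
      (shiftFunctorCompIsoId C n (-n) (add_neg_cancel n)).app B).symm
  · exact ((shiftFunctorCompIsoId C (-n) n (neg_add_cancel n)).app A).symm

lemma shiftSet_zero {S : Set C} (hS : isoClosed C S) : shiftSet C S 0 = S := by
  ext A
  rw [mem_shiftSet_iff hS, neg_zero]
  exact ⟨hS ((shiftFunctorZero C ℤ).app A), hS ((shiftFunctorZero C ℤ).app A).symm⟩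

lemma shiftSet_shiftSet (S : Set C) (a b : ℤ) :
    shiftSet C (shiftSet C S a) b = shiftSet C S (a + b) := by
  ext A
  constructor
  · rintro ⟨B, ⟨B₀, hB₀, ⟨e₀⟩⟩, ⟨e⟩⟩
    exact ⟨B₀, hB₀, ⟨e ≪≫ (shiftFunctor C b).mapIso e₀ ≪≫
      ((shiftFunctorAdd' C a b _ rfl).app B₀).symm⟩⟩
  · rintro ⟨B₀, hB₀, ⟨e⟩⟩
    exact ⟨B₀⟦a⟧, shift_mem_shiftSet hB₀ a, ⟨e ≪≫ (shiftFunctorAdd' C a b _ rfl).app B₀⟩⟩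

end ShiftSet

section Orthogonal

variable {C : Type*} [Category C] [HasZeroMorphisms C]

def rightOrth (S : Set C) : Set C :=
  {Z | ∀ W ∈ S, ∀ f : W ⟶ Z, f = 0}

lemma rightOrth_isoClosed (S : Set C) : isoClosed C (rightOrth S) := fun A B e hA W hW f => by
  rw [← cancel_mono e.inv, hA W hW (f ≫ e.inv), zero_comp]

end Orthogonal

section ShiftHom

variable {C : Type*} [Category C] [Preadditive C] [HasShift C ℤ]
  [∀ n : ℤ, (shiftFunctor C n).Additive]

lemma homs_shift_eq_zero {A B : C} (h : ∀ f : A ⟶ B, f = 0) (n : ℤ) :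
    ∀ g : A⟦n⟧ ⟶ B⟦n⟧, g = 0 := fun g => by
  obtain ⟨f, rfl⟩ := (shiftFunctor C n).map_surjective g
  rw [h f, Functor.map_zero]

lemma homs_shift_eq_zero_iff {A B : C} (n : ℤ) :
    (∀ g : A⟦n⟧ ⟶ B, g = 0) ↔ ∀ f : A ⟶ B⟦-n⟧, f = 0 := by
  let e := (shiftFunctorCompIsoId C (-n) n (neg_add_cancel n)).app B
  constructor
  · intro h f
    apply (shiftFunctor C n).map_injective
    simpa using h (f⟦n⟧' ≫ e.hom)
  · intro h g
    obtain ⟨f, hf⟩ := (shiftFunctor C n).map_surjective (g ≫ e.inv)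
    rw [h f, Functor.map_zero] at hf
    simpa using hf.symm

end ShiftHom

section Triangles

variable {C : Type*} [Category C] [Preadditive C] [HasZeroObject C] [HasShift C ℤ]
  [∀ n : ℤ, (shiftFunctor C n).Additive] [Pretriangulated C]

section

variable {T : Triangle C} (hT : T ∈ distTriang C) {W : C}
include hT

lemma distTriang_eq_zero_of_mor₁_comp (h₃ : ∀ g : T.obj₃ ⟶ W, g = 0) {f : T.obj₂ ⟶ W}
    (hf : T.mor₁ ≫ f = 0) : f = 0 := by
  obtain ⟨g, rfl⟩ := T.yoneda_exact₂ hT f hf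
  rw [h₃ g, comp_zero]

lemma distTriang_eq_zero_of_comp_mor₂ (h₁ : ∀ g : W ⟶ T.obj₁, g = 0) {f : W ⟶ T.obj₂}
    (hf : f ≫ T.mor₂ = 0) : f = 0 := by
  obtain ⟨g, rfl⟩ := T.coyoneda_exact₂ hT f hf
  rw [h₁ g, zero_comp]

lemma distTriang_eq_zero_of_comp_shift_mor₁ (h₃ : ∀ g : W ⟶ T.obj₃, g = 0)
    {f : W ⟶ T.obj₁⟦(1 : ℤ)⟧} (hf : f ≫ T.mor₁⟦(1 : ℤ)⟧' = 0) : f = 0 := by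
  obtain ⟨g, rfl⟩ := T.coyoneda_exact₁ hT f hf
  rw [h₃ g, zero_comp]

end

lemma starSet_isoClosed (X Y : Set C) : isoClosed C (starSet C X Y) := by
  rintro A B e ⟨P, Q, f, g, h, hP, hQ, hT⟩
  refine ⟨P, Q, f ≫ e.hom, e.inv ≫ g, h, hP, hQ, isomorphic_distinguished _ hT _ ?_⟩
  exact Triangle.isoMk _ _ (Iso.refl _) e.symm (Iso.refl _) (by simp [Triangle.mk])
    (by simp [Triangle.mk]) (by simp [Triangle.mk])

lemma mem_starSet_of_distinguished {X Y : Set C} {T : Triangle C} (hT : T ∈ distTriang C)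
    (h₁ : T.obj₁ ∈ X) (h₃ : T.obj₃ ∈ Y) : T.obj₂ ∈ starSet C X Y :=
  ⟨_, _, T.mor₁, T.mor₂, T.mor₃, h₁, h₃, hT⟩

lemma starSet_mono_right {X Y Y' : Set C} (h : Y ⊆ Y') : starSet C X Y ⊆ starSet C X Y' := by
  rintro A ⟨P, Q, f, g, k, hP, hQ, hT⟩
  exact ⟨P, Q, f, g, k, hP, h hQ, hT⟩

lemma shift_mem_starSet {X Y : Set C} {A : C} (hA : A ∈ starSet C X Y) (n : ℤ) :
    A⟦n⟧ ∈ starSet C (shiftSet C X n) (shiftSet C Y n) := by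
  obtain ⟨P, Q, f, g, h, hP, hQ, hT⟩ := hA
  exact mem_starSet_of_distinguished (Triangle.shift_distinguished _ hT n)
    (shift_mem_shiftSet hP n) (shift_mem_shiftSet hQ n)

lemma shiftSet_starSet {X Y : Set C} (hX : isoClosed C X) (hY : isoClosed C Y) (n : ℤ) :
    shiftSet C (starSet C X Y) n = starSet C (shiftSet C X n) (shiftSet C Y n) := by
  apply Set.Subset.antisymm
  · rintro A ⟨A₀, hA₀, ⟨e⟩⟩
    exact starSet_isoClosed _ _ e.symm (shift_mem_starSet hA₀ n)
  · intro A hA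
    have h := shift_mem_starSet hA (-n)
    rw [shiftSet_shiftSet, shiftSet_shiftSet, add_neg_cancel, shiftSet_zero hX,
      shiftSet_zero hY] at h
    exact (mem_shiftSet_iff (starSet_isoClosed X Y)).2 h

lemma mem_rightOrth_of_distinguished {S : Set C} {T : Triangle C} (hT : T ∈ distTriang C)
    (h₁ : T.obj₁ ∈ rightOrth S) (h₃ : T.obj₃ ∈ rightOrth S) : T.obj₂ ∈ rightOrth S :=
  fun W hW _ => distTriang_eq_zero_of_comp_mor₂ hT (h₁ W hW) (h₃ W hW _)

lemma isTStructure_of_aisle {A : Set C} (hA : isoClosed C A)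
    (hshift : ∀ W ∈ A, W⟦(1 : ℤ)⟧ ∈ A) (hcover : ∀ X : C, X ∈ starSet C A (rightOrth A)) :
    IsTStructure C A (shiftSet C (rightOrth A) 1) := by
  have hB : shiftSet C (shiftSet C (rightOrth A) 1) (-1) = rightOrth A := by
    rw [shiftSet_shiftSet, add_neg_cancel, shiftSet_zero (rightOrth_isoClosed A)]
  refine ⟨Set.subset_univ _, Set.subset_univ _, fun _ _ e hX _ => hA e hX,
    fun _ _ e hX _ => shiftSet_isoClosed _ _ e hX, ?_, ?_, ?_, ?_⟩
  · rw [hB]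
    exact fun W hW Z hZ f => hZ W hW f
  · rw [hB]
    exact fun X _ => hcover X
  · intro W hW
    rw [mem_shiftSet_iff hA, neg_neg]
    exact hshift W hW
  · rw [hB]
    intro Z hZ
    rw [mem_shiftSet_iff (rightOrth_isoClosed A)]
    exact fun W hW => (homs_shift_eq_zero_iff 1).1 (hZ _ (hshift W hW))

end Triangles

namespace IsTorsionPairIn

variable {C : Type*} [Category C] [Preadditive C] [HasZeroObject C] [HasShift C ℤ]
  [∀ n : ℤ, (shiftFunctor C n).Additive] [Pretriangulated C] [HasBinaryBiproducts C]
  {H T F : Set C} (hTF : IsTorsionPairIn C H T F) {Tr : Triangle C} (hTr : Tr ∈ distTriang C)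
include hTF hTr

lemma mem_torsion_of_mor₂_eq_zero (h₁ : Tr.obj₁ ∈ T) (hH : Tr.obj₂ ∈ H) (h : Tr.mor₂ = 0) :
    Tr.obj₂ ∈ T :=
  have := Tr.epi₁ hTr h
  have := isSplitEpi_of_epi Tr.mor₁
  hTF.summandT _ h₁ _ (section_ Tr.mor₁) Tr.mor₁ (IsSplitEpi.id _) hH

lemma mem_torsion_of_mor₁_eq_zero (h₃ : Tr.obj₃ ∈ T) (hH : Tr.obj₂ ∈ H) (h : Tr.mor₁ = 0) :
    Tr.obj₂ ∈ T :=
  have := Tr.mono₂ hTr h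
  have := isSplitMono_of_mono Tr.mor₂
  hTF.summandT _ h₃ _ Tr.mor₂ (retraction Tr.mor₂) (IsSplitMono.id _) hH

lemma mem_torsionFree_of_mor₂_eq_zero (h₁ : Tr.obj₁ ∈ F) (hH : Tr.obj₂ ∈ H) (h : Tr.mor₂ = 0) :
    Tr.obj₂ ∈ F :=
  have := Tr.epi₁ hTr h
  have := isSplitEpi_of_epi Tr.mor₁
  hTF.summandF _ h₁ _ (section_ Tr.mor₁) Tr.mor₁ (IsSplitEpi.id _) hH

lemma mem_torsionFree_of_mor₁_eq_zero (h₃ : Tr.obj₃ ∈ F) (hH : Tr.obj₂ ∈ H) (h : Tr.mor₁ = 0) :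
    Tr.obj₂ ∈ F :=
  have := Tr.mono₂ hTr h
  have := isSplitMono_of_mono Tr.mor₂
  hTF.summandF _ h₃ _ Tr.mor₂ (retraction Tr.mor₂) (IsSplitMono.id _) hH

end IsTorsionPairIn

namespace IsTStructure

variable {C : Type*} [Category C] [Preadditive C] [HasZeroObject C] [HasShift C ℤ]
  [∀ n : ℤ, (shiftFunctor C n).Additive] [Pretriangulated C] {L G : Set C}

lemma isoClosed_aisle (h : IsTStructure C L G) : isoClosed C L :=
  fun _ _ e hA => h.isoL e hA trivial

lemma isoClosed_coaisle (h : IsTStructure C L G) : isoClosed C G :=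
  fun _ _ e hA => h.isoG e hA trivial

def toTStructure (h : IsTStructure C L G) : TStructure C where
  le n X := X ∈ shiftSet C L (-n)
  ge n X := X ∈ shiftSet C G (-n)
  le_isClosedUnderIsomorphisms _ := ⟨fun e hX => shiftSet_isoClosed _ _ e hX⟩
  ge_isClosedUnderIsomorphisms _ := ⟨fun e hX => shiftSet_isoClosed _ _ e hX⟩
  le_shift n a n' ha X hX := by
    simpa only [shiftSet_shiftSet, show -n + a = -n' by lia] using shift_mem_shiftSet hX a
  ge_shift n a n' ha X hX := by
    simpa only [shiftSet_shiftSet, show -n + a = -n' by lia] using shift_mem_shiftSet hX a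
  zero' X Y f hX hY := by
    rw [neg_zero, shiftSet_zero h.isoClosed_aisle] at hX
    exact h.hom_zero X hX Y hY f
  le_zero_le X hX := by
    rw [neg_zero, shiftSet_zero h.isoClosed_aisle] at hX
    exact h.shiftL hX
  ge_one_le X hX := by
    change X ∈ shiftSet C G (-0)
    rw [neg_zero, shiftSet_zero h.isoClosed_coaisle]
    exact h.shiftG hX
  exists_triangle_zero_one A := by
    obtain ⟨X, Y, f, g, k, hX, hY, hT⟩ := h.cover A trivial
    refine ⟨X, Y, ?_, hY, f, g, k, hT⟩
    rwa [neg_zero, shiftSet_zero h.isoClosed_aisle]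

lemma exists_tStructure (h : IsTStructure C L G) :
    ∃ t : TStructure C, L = {X | t.IsLE X 0} ∧ G = {X | t.IsGE X 0} := by
  refine ⟨h.toTStructure, ?_, ?_⟩ <;> ext X <;>
    simp only [Set.mem_ofPred_eq, ← TStructure.le_iff_isLE, ← TStructure.ge_iff_isGE]
  · change X ∈ L ↔ X ∈ shiftSet C L (-0)
    rw [neg_zero, shiftSet_zero h.isoClosed_aisle]
  · change X ∈ G ↔ X ∈ shiftSet C G (-0)
    rw [neg_zero, shiftSet_zero h.isoClosed_coaisle]

end IsTStructure

namespace CategoryTheory.Triangulated.TStructure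

variable {C : Type*} [Category C] [Preadditive C] [HasZeroObject C] [HasShift C ℤ]
  [∀ n : ℤ, (shiftFunctor C n).Additive] [Pretriangulated C]

section Basic

variable (t : TStructure C)

lemma isoClosed_setOf_isLE (n : ℤ) : isoClosed C {X | t.IsLE X n} :=
  fun _ _ e (_ : t.IsLE _ n) => t.isLE_of_iso e n

lemma isoClosed_setOf_isGE (n : ℤ) : isoClosed C {X | t.IsGE X n} :=
  fun _ _ e (_ : t.IsGE _ n) => t.isGE_of_iso e n

lemma shiftSet_setOf_isLE (n a : ℤ) : shiftSet C {X | t.IsLE X n} a = {X | t.IsLE X (n - a)} := by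
  ext X
  rw [mem_shiftSet_iff (t.isoClosed_setOf_isLE n), Set.mem_ofPred_eq, Set.mem_ofPred_eq,
    t.isLE_shift_iff X (n - a) (-a) n (by lia)]

lemma shiftSet_setOf_isGE (n a : ℤ) : shiftSet C {X | t.IsGE X n} a = {X | t.IsGE X (n - a)} := by
  ext X
  rw [mem_shiftSet_iff (t.isoClosed_setOf_isGE n), Set.mem_ofPred_eq, Set.mem_ofPred_eq,
    t.isGE_shift_iff X (n - a) (-a) n (by lia)]

lemma isLE_of_retract {X A : C} {i : X ⟶ A} {p : A ⟶ X} (h : i ≫ p = 𝟙 X) {n : ℤ}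
    (hA : t.IsLE A n) : t.IsLE X n := by
  rw [t.isLE_iff_orthogonal n (n + 1) rfl] at hA ⊢
  intro Y f hY
  rw [← id_comp f, ← h, assoc, hA Y (p ≫ f) hY, comp_zero]

lemma isGE_of_retract {X A : C} {i : X ⟶ A} {p : A ⟶ X} (h : i ≫ p = 𝟙 X) {n : ℤ}
    (hA : t.IsGE A n) : t.IsGE X n := by
  rw [t.isGE_iff_orthogonal (n - 1) n (by lia)] at hA ⊢
  intro Y f hY
  rw [← comp_id f, ← h, ← assoc, hA Y (f ≫ i) hY, zero_comp]

lemma isGE_of_setOf_isLE_subset {t' : TStructure C} {a a' b b' : ℤ} (ha : a + 1 = a')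
    (hb : b + 1 = b') (h : {X | t.IsLE X a} ⊆ {X | t'.IsLE X b}) {Y : C} (hY : t'.IsGE Y b') :
    t.IsGE Y a' :=
  (t.isGE_iff_orthogonal a a' ha Y).2
    fun _ f hX => t'.zero_of_isLE_of_isGE f b b' (by lia) (h hX) hY

end Basic

def extendedHeart (t : TStructure C) (m : ℤ) : Set C :=
  {X | t.IsGE X (1 - m)} ∩ {X | t.IsLE X 0}

section Restriction

variable {t t' : TStructure C} {m : ℤ}

theorem isSTorsionPairIn_of_le [HasBinaryBiproducts C]
    (h₁ : {X | t.IsLE X (-m)} ⊆ {X | t'.IsLE X 0}) (h₂ : {X | t'.IsLE X 0} ⊆ {X | t.IsLE X 0}) :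
    IsSTorsionPairIn C (t.extendedHeart m) ({X | t'.IsLE X 0} ∩ {X | t.IsGE X (1 - m)})
      ({X | t'.IsGE X 1} ∩ {X | t.IsLE X 0}) where
  subT _ hX := ⟨hX.2, h₂ hX.1⟩
  subF _ hX := ⟨t.isGE_of_setOf_isLE_subset (by lia) rfl h₁ hX.1, hX.2⟩
  isoT _ _ e hX hY := ⟨have : t'.IsLE _ 0 := hX.1; t'.isLE_of_iso e 0, hY.1⟩
  isoF _ _ e hX hY := ⟨have : t'.IsGE _ 1 := hX.1; t'.isGE_of_iso e 1, hY.2⟩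
  zeroT Z hZ hH := ⟨t'.isLE_of_isZero hZ 0, hH.1⟩
  zeroF Z hZ hH := ⟨t'.isGE_of_isZero hZ 1, hH.2⟩
  sumT A hA B hB := ⟨t'.isLE₂ _ (binaryBiproductTriangle_distinguished A B) 0 hA.1 hB.1,
    t.isGE₂ _ (binaryBiproductTriangle_distinguished A B) _ hA.2 hB.2⟩
  sumF A hA B hB := ⟨t'.isGE₂ _ (binaryBiproductTriangle_distinguished A B) 1 hA.1 hB.1,
    t.isLE₂ _ (binaryBiproductTriangle_distinguished A B) _ hA.2 hB.2⟩
  summandT _ hA _ _ _ h hX := ⟨t'.isLE_of_retract h hA.1, hX.1⟩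
  summandF _ hA _ _ _ h hX := ⟨t'.isGE_of_retract h hA.1, hX.2⟩
  hom_zero _ hA _ hB f := t'.zero_of_isLE_of_isGE f 0 1 (by lia) hA.1 hB.1
  neg_hom_zero _ hA B hB f :=
    have : t'.IsGE B 1 := hB.1
    t'.zero_of_isLE_of_isGE f 0 2 (by lia) hA.1 (t'.isGE_shift B 1 (-1) 2)
  cover X hX := by
    obtain ⟨X', X'', hX', hX'', f, g, h, hT⟩ := t'.exists_triangle X 0 1 rfl
    have : t'.IsLE X' 0 := ⟨hX'⟩
    have : t'.IsGE X'' 1 := ⟨hX''⟩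
    refine ⟨X', X'', f, g, h, ⟨⟨hX'⟩, ?_⟩, ⟨⟨hX''⟩, ?_⟩, hT⟩
    · have : t'.IsGE (X''⟦(-1 : ℤ)⟧) 2 := t'.isGE_shift X'' 1 (-1) 2
      have : t'.IsGE (X''⟦(-1 : ℤ)⟧) 1 := t'.isGE_of_ge _ 1 2
      exact t.isGE₂ _ (inv_rot_of_distTriang _ hT) _
        (t.isGE_of_setOf_isLE_subset (by lia) rfl h₁ this) hX.1
    · have : t'.IsLE (X'⟦(1 : ℤ)⟧) (-1) := t'.isLE_shift X' 0 1 (-1)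
      have : t'.IsLE (X'⟦(1 : ℤ)⟧) 0 := t'.isLE_of_le _ (-1) 0
      exact t.isLE₂ _ (rot_of_distTriang _ hT) 0 hX.2 (h₂ this)

theorem starSet_isLE_inter_isGE_eq (h₁ : {X | t.IsLE X (-m)} ⊆ {X | t'.IsLE X 0}) :
    starSet C {X | t.IsLE X (-m)} ({X | t'.IsLE X 0} ∩ {X | t.IsGE X (1 - m)}) =
      {X | t'.IsLE X 0} := by
  apply Set.Subset.antisymm
  · rintro A ⟨X, Y, f, g, h, hX, hY, hT⟩
    exact t'.isLE₂ _ hT 0 (h₁ hX) hY.1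
  · intro A (hA : t'.IsLE A 0)
    obtain ⟨X, Y, hX, hY, f, g, h, hT⟩ := t.exists_triangle A (-m) (1 - m) (by lia)
    have : t.IsLE X (-m) := ⟨hX⟩
    have : t.IsLE (X⟦(1 : ℤ)⟧) (-m - 1) := t.isLE_shift X (-m) 1 (-m - 1)
    have : t.IsLE (X⟦(1 : ℤ)⟧) (-m) := t.isLE_of_le _ (-m - 1) (-m)
    exact ⟨X, Y, f, g, h, ⟨hX⟩, ⟨t'.isLE₂ _ (rot_of_distTriang _ hT) 0 hA (h₁ this), ⟨hY⟩⟩, hT⟩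

theorem starSet_shift_isGE_inter_isLE_eq (h₂ : {X | t'.IsLE X 0} ⊆ {X | t.IsLE X 0}) :
    starSet C (shiftSet C ({X | t'.IsGE X 1} ∩ {X | t.IsLE X 0}) 1) {X | t.IsGE X 0} =
      {X | t'.IsGE X 0} := by
  have hGE₁ : ∀ Y : C, t.IsGE Y 1 → t'.IsGE Y 1 := fun Y hY =>
    t'.isGE_of_setOf_isLE_subset rfl rfl h₂ hY
  have hGE₀ : ∀ Y : C, t.IsGE Y 0 → t'.IsGE Y 0 := fun Y _ => by
    have : t'.IsGE (Y⟦(-1 : ℤ)⟧) 1 := hGE₁ _ (t.isGE_shift Y 0 (-1) 1)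
    exact t'.isGE_of_shift Y 0 (-1) 1
  apply Set.Subset.antisymm
  · rintro A ⟨X, Y, f, g, h, ⟨X₀, ⟨(hX₀ : t'.IsGE X₀ 1), -⟩, ⟨e⟩⟩, hY, hT⟩
    have : t'.IsGE (X₀⟦(1 : ℤ)⟧) 0 := t'.isGE_shift X₀ 1 1 0
    exact t'.isGE₂ _ hT 0 (t'.isGE_of_iso e.symm 0) (hGE₀ Y hY)
  · intro A (hA : t'.IsGE A 0)
    obtain ⟨X, Y, hX, hY, f, g, h, hT⟩ := t.exists_triangle A (-1) 0 (by lia)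
    have : t.IsLE X (-1) := ⟨hX⟩
    have hY : t.IsGE Y 0 := ⟨hY⟩
    have : t'.IsGE (Y⟦(-1 : ℤ)⟧) 1 := hGE₁ _ (t.isGE_shift Y 0 (-1) 1)
    have : t'.IsGE (Y⟦(-1 : ℤ)⟧) 0 := t'.isGE_of_ge _ 0 1
    have : t'.IsGE X 0 := t'.isGE₂ _ (inv_rot_of_distTriang _ hT) 0 this hA
    refine ⟨X, Y, f, g, h, ⟨X⟦(-1 : ℤ)⟧, ⟨t'.isGE_shift X 0 (-1) 1, t.isLE_shift X (-1) (-1) 0⟩,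
      ⟨((shiftFunctorCompIsoId C (-1) 1 (neg_add_cancel 1)).app X).symm⟩⟩, hY, hT⟩

end Restriction

section Tilt

variable (t : TStructure C) {m : ℤ} {T F : Set C}

def tiltAisle (F : Set C) : Set C :=
  {W | t.IsLE W 0 ∧ ∀ Z ∈ F, ∀ f : W ⟶ Z, f = 0}

lemma tiltAisle_isoClosed (F : Set C) : isoClosed C (t.tiltAisle F) := by
  rintro A B e ⟨hA, hAF⟩
  refine ⟨t.isLE_of_iso e 0, fun Z hZ f => ?_⟩
  rw [← cancel_epi e.hom, hAF Z hZ (e.hom ≫ f), comp_zero]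

lemma mem_tiltAisle_of_distinguished {Tr : Triangle C} (hTr : Tr ∈ distTriang C)
    (h₁ : Tr.obj₁ ∈ t.tiltAisle F) (h₃ : Tr.obj₃ ∈ t.tiltAisle F) : Tr.obj₂ ∈ t.tiltAisle F :=
  ⟨t.isLE₂ Tr hTr 0 h₁.1 h₃.1,
    fun Z hZ _ => distTriang_eq_zero_of_mor₁_comp hTr (h₃.2 Z hZ) (h₁.2 Z hZ _)⟩

lemma torsionFree_subset_rightOrth_tiltAisle : F ⊆ rightOrth (t.tiltAisle F) :=
  fun _ hZ _ hW f => hW.2 _ hZ f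

lemma isGE_one_subset_rightOrth_tiltAisle : {X | t.IsGE X 1} ⊆ rightOrth (t.tiltAisle F) :=
  fun _ hZ _ hW f => t.zero_of_isLE_of_isGE f 0 1 (by lia) hW.1 hZ

variable [HasBinaryBiproducts C]

lemma isLE_neg_subset_tiltAisle (hm : 0 ≤ m) (hTF : IsTorsionPairIn C (t.extendedHeart m) T F) :
    {X | t.IsLE X (-m)} ⊆ t.tiltAisle F := fun X (hX : t.IsLE X (-m)) =>
  ⟨t.isLE_of_le X (-m) 0,
    fun _ hZ f => t.zero_of_isLE_of_isGE f (-m) (1 - m) (by lia) hX (hTF.subF hZ).1⟩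

lemma torsion_subset_tiltAisle (hTF : IsTorsionPairIn C (t.extendedHeart m) T F) :
    T ⊆ t.tiltAisle F :=
  fun P hP => ⟨(hTF.subT hP).2, fun Z hZ f => hTF.hom_zero P hP Z hZ f⟩

lemma shift_torsion_mem_tiltAisle (hTF : IsSTorsionPairIn C (t.extendedHeart m) T F) {P : C}
    (hP : P ∈ T) : P⟦(1 : ℤ)⟧ ∈ t.tiltAisle F := by
  have : t.IsLE P 0 := (hTF.subT hP).2
  have : t.IsLE (P⟦(1 : ℤ)⟧) (-1) := t.isLE_shift P 0 1 (-1)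
  exact ⟨t.isLE_of_le _ (-1) 0,
    fun Z hZ => (homs_shift_eq_zero_iff 1).2 (hTF.neg_hom_zero P hP Z hZ)⟩

lemma tiltAisle_subset_starSet (hm : 0 ≤ m) (hTF : IsTorsionPairIn C (t.extendedHeart m) T F) :
    t.tiltAisle F ⊆ starSet C {X | t.IsLE X (-m)} T := by
  rintro W ⟨hW, hWF⟩
  obtain ⟨X, W', hX, hW', p, q, r, hTr⟩ := t.exists_triangle W (-m) (1 - m) (by lia)
  have : t.IsLE X (-m) := ⟨hX⟩
  have hX₁ : t.IsLE (X⟦(1 : ℤ)⟧) (-m - 1) := t.isLE_shift X (-m) 1 (-m - 1)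
  have hW'H : W' ∈ t.extendedHeart m :=
    ⟨⟨hW'⟩, t.isLE₂ _ (rot_of_distTriang _ hTr) 0 hW (t.isLE_of_le (X⟦(1 : ℤ)⟧) (-m - 1) 0)⟩
  obtain ⟨T', F', τ, s, e, hT', hF', hTor⟩ := hTF.cover W' hW'H
  have hs : s = 0 := distTriang_eq_zero_of_mor₁_comp (rot_of_distTriang _ hTr)
    (fun g => t.zero_of_isLE_of_isGE g (-m - 1) (1 - m) (by lia) hX₁ (hTF.subF hF').1)
    (hWF F' hF' (q ≫ s))
  exact ⟨X, W', p, q, r, this, hTF.mem_torsion_of_mor₂_eq_zero hTor hT' hW'H hs, hTr⟩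

lemma starSet_eq_tiltAisle (hm : 0 ≤ m) (hTF : IsTorsionPairIn C (t.extendedHeart m) T F) :
    starSet C {X | t.IsLE X (-m)} T = t.tiltAisle F := by
  refine Set.Subset.antisymm ?_ (t.tiltAisle_subset_starSet hm hTF)
  rintro W ⟨X, Y, f, g, h, hX, hY, hT⟩
  exact t.mem_tiltAisle_of_distinguished hT (t.isLE_neg_subset_tiltAisle hm hTF hX)
    (t.torsion_subset_tiltAisle hTF hY)

lemma shift_mem_tiltAisle (hm : 0 ≤ m) (hTF : IsSTorsionPairIn C (t.extendedHeart m) T F)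
    {W : C} (hW : W ∈ t.tiltAisle F) : W⟦(1 : ℤ)⟧ ∈ t.tiltAisle F := by
  obtain ⟨X, W', p, q, r, (hX : t.IsLE X (-m)), hW', hTr⟩ :=
    t.tiltAisle_subset_starSet hm hTF.toIsTorsionPairIn hW
  have : t.IsLE (X⟦(1 : ℤ)⟧) (-m - 1) := t.isLE_shift X (-m) 1 (-m - 1)
  exact t.mem_tiltAisle_of_distinguished (Triangle.shift_distinguished _ hTr 1)
    (t.isLE_neg_subset_tiltAisle hm hTF.toIsTorsionPairIn (t.isLE_of_le (X⟦(1 : ℤ)⟧) (-m - 1) (-m)))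
    (t.shift_torsion_mem_tiltAisle hTF hW')

lemma isGE_of_mem_rightOrth_tiltAisle (hm : 0 ≤ m)
    (hTF : IsTorsionPairIn C (t.extendedHeart m) T F) {Z : C}
    (hZ : Z ∈ rightOrth (t.tiltAisle F)) : t.IsGE Z (1 - m) :=
  (t.isGE_iff_orthogonal (-m) (1 - m) (by lia) Z).2
    fun W f hW => hZ W (t.isLE_neg_subset_tiltAisle hm hTF hW) f

lemma mem_starSet_of_isGE_of_torsion_orth (hm : 0 ≤ m)
    (hTF : IsTorsionPairIn C (t.extendedHeart m) T F) {Z : C} (hZ : t.IsGE Z (1 - m))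
    (hTZ : ∀ P ∈ T, ∀ f : P ⟶ Z, f = 0) : Z ∈ starSet C F {X | t.IsGE X 1} := by
  obtain ⟨X, Y, hX, hY, f, g, h, hTr⟩ := t.exists_triangle Z 0 1 (by lia)
  have : t.IsGE Y 1 := ⟨hY⟩
  have hY₁ : t.IsGE (Y⟦(-1 : ℤ)⟧) 2 := t.isGE_shift Y 1 (-1) 2
  have hXH : X ∈ t.extendedHeart m :=
    ⟨t.isGE₂ _ (inv_rot_of_distTriang _ hTr) _ (t.isGE_of_ge (Y⟦(-1 : ℤ)⟧) (1 - m) 2) hZ, ⟨hX⟩⟩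
  obtain ⟨T', F', τ, s, e, hT', hF', hTor⟩ := hTF.cover X hXH
  have hτ : τ = 0 := distTriang_eq_zero_of_comp_mor₂ (inv_rot_of_distTriang _ hTr)
    (fun g => t.zero_of_isLE_of_isGE g 0 2 (by lia) (hTF.subT hT').2 hY₁) (hTZ T' hT' (τ ≫ f))
  exact ⟨X, Y, f, g, h, hTF.mem_torsionFree_of_mor₁_eq_zero hTor hF' hXH hτ, this, hTr⟩

lemma starSet_shift_torsionFree_eq (hm : 0 ≤ m)
    (hTF : IsTorsionPairIn C (t.extendedHeart m) T F) :
    starSet C (shiftSet C F 1) {X | t.IsGE X 0} = shiftSet C (rightOrth (t.tiltAisle F)) 1 := by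
  suffices h : starSet C (shiftSet C F 0) {X | t.IsGE X 1} = rightOrth (t.tiltAisle F) by
    rw [← h, shiftSet_starSet (shiftSet_isoClosed F 0) (t.isoClosed_setOf_isGE 1),
      shiftSet_shiftSet, t.shiftSet_setOf_isGE, zero_add, sub_self]
  apply Set.Subset.antisymm
  · rintro Z ⟨X, Y, f, g, h, ⟨X₀, hX₀, ⟨e⟩⟩, hY, hTr⟩
    refine mem_rightOrth_of_distinguished hTr ?_ (t.isGE_one_subset_rightOrth_tiltAisle hY)
    exact rightOrth_isoClosed _ (e ≪≫ (shiftFunctorZero C ℤ).app X₀).symm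
      (t.torsionFree_subset_rightOrth_tiltAisle hX₀)
  · intro Z hZ
    obtain ⟨X, Y, f, g, h, hX, hY, hTr⟩ := t.mem_starSet_of_isGE_of_torsion_orth hm hTF
      (t.isGE_of_mem_rightOrth_tiltAisle hm hTF hZ)
      (fun P hP => hZ P (t.torsion_subset_tiltAisle hTF hP))
    exact ⟨X, Y, f, g, h, ⟨X, hX, ⟨((shiftFunctorZero C ℤ).app X).symm⟩⟩, hY, hTr⟩

lemma exists_distTriang_tiltAisle_torsionFree (hm : 0 ≤ m)
    (hTF : IsTorsionPairIn C (t.extendedHeart m) T F) {X : C} (hX : t.IsLE X 0) :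
    ∃ (K F' : C) (u : K ⟶ X) (v : X ⟶ F') (δ : F' ⟶ K⟦(1 : ℤ)⟧),
      Triangle.mk u v δ ∈ distTriang C ∧ K ∈ t.tiltAisle F ∧ F' ∈ F := by
  obtain ⟨X₁, X₂, hX₁, hX₂, p, q, r, hTr⟩ := t.exists_triangle X (-m) (1 - m) (by lia)
  have hX₁ : t.IsLE X₁ (-m) := ⟨hX₁⟩
  have hX₁' : t.IsLE (X₁⟦(1 : ℤ)⟧) (-m - 1) := t.isLE_shift X₁ (-m) 1 (-m - 1)
  have hX₂H : X₂ ∈ t.extendedHeart m :=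
    ⟨⟨hX₂⟩, t.isLE₂ _ (rot_of_distTriang _ hTr) 0 hX (t.isLE_of_le (X₁⟦(1 : ℤ)⟧) (-m - 1) 0)⟩
  obtain ⟨T', F', τ, s, e, hT', hF', hTor⟩ := hTF.cover X₂ hX₂H
  obtain ⟨K, u, δ, hK⟩ := distinguished_cocone_triangle₁ (q ≫ s)
  refine ⟨K, F', u, q ≫ s, δ, hK, ?_, hF'⟩
  suffices hKZ : ∀ Z, t.IsGE Z (1 - m) → (∀ P ∈ T, ∀ f : P ⟶ Z, f = 0) → ∀ ξ : K ⟶ Z, ξ = 0 from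
    ⟨(t.isLE_iff_orthogonal 0 1 rfl K).2 fun Z ξ (hZ : t.IsGE Z 1) =>
        hKZ Z (t.isGE_of_ge Z (1 - m) 1)
          (fun P hP f => t.zero_of_isLE_of_isGE f 0 1 (by lia) (hTF.subT hP).2 hZ) ξ,
      fun Z hZ => hKZ Z (hTF.subF hZ).1 fun P hP => hTF.hom_zero P hP Z hZ⟩
  intro Z hZ hTZ ξ
  -- Every map `X ⟶ Z` factors through `q ≫ s`, so it is killed by `u`. Hence it suffices that
  -- `ξ⟦1⟧` vanish on `δ`: it then factors through `u⟦1⟧`.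
  have hu : ∀ ζ : X ⟶ Z, u ≫ ζ = 0 := fun ζ => by
    obtain ⟨y, rfl⟩ := Triangle.yoneda_exact₂ _ hTr ζ
      (t.zero_of_isLE_of_isGE _ (-m) (1 - m) (by lia) hX₁ hZ)
    obtain ⟨w, rfl⟩ := Triangle.yoneda_exact₂ _ hTor y (hTZ T' hT' _)
    have huqs : u ≫ q ≫ s = 0 := comp_distTriang_mor_zero₁₂ _ hK
    exact (reassoc_of% huqs) w |>.trans zero_comp
  have : t.IsGE (Z⟦(1 : ℤ)⟧) (-m) := t.isGE_shift Z (1 - m) 1 (-m)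
  have hqsδ : (q ≫ s) ≫ δ = 0 := comp_distTriang_mor_zero₂₃ _ hK
  rw [assoc] at hqsδ
  have hsδ : s ≫ δ ≫ ξ⟦(1 : ℤ)⟧' = 0 :=
    distTriang_eq_zero_of_mor₁_comp (rot_of_distTriang _ hTr)
      (fun g => t.zero_of_isLE_of_isGE g (-m - 1) (-m) (by lia) hX₁' this)
      ((reassoc_of% hqsδ) (ξ⟦(1 : ℤ)⟧') |>.trans zero_comp)
  have hδ : δ ≫ ξ⟦(1 : ℤ)⟧' = 0 := distTriang_eq_zero_of_mor₁_comp (rot_of_distTriang _ hTor)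
    (homs_shift_eq_zero (hTZ T' hT') 1) hsδ
  obtain ⟨g, hg⟩ := Triangle.yoneda_exact₃ _ (rot_of_distTriang _ hK) (ξ⟦(1 : ℤ)⟧') hδ
  obtain ⟨ζ, rfl⟩ := (shiftFunctor C (1 : ℤ)).map_surjective (X := X) (Y := Z) g
  apply (shiftFunctor C (1 : ℤ)).map_injective
  have hξ : ξ⟦(1 : ℤ)⟧' = (-u⟦(1 : ℤ)⟧') ≫ ζ⟦(1 : ℤ)⟧' := hg
  rw [hξ, Preadditive.neg_comp, ← Functor.map_comp, hu ζ, Functor.map_zero, neg_zero]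

lemma mem_starSet_tiltAisle_rightOrth (hm : 0 ≤ m)
    (hTF : IsTorsionPairIn C (t.extendedHeart m) T F) (A : C) :
    A ∈ starSet C (t.tiltAisle F) (rightOrth (t.tiltAisle F)) := by
  obtain ⟨X, Y, hX, hY, f, g, h, hTA⟩ := t.exists_triangle A 0 1 (by lia)
  obtain ⟨K, F', u, v, δ, hTK, hK, hF'⟩ := t.exists_distTriang_tiltAisle_torsionFree hm hTF ⟨hX⟩
  obtain ⟨Q, γ, δ', hTC⟩ := distinguished_cocone_triangle (u ≫ f)
  refine ⟨K, Q, u ≫ f, γ, δ', hK, fun P hP c => ?_, hTC⟩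
  have hPY : ∀ y : P ⟶ Y, y = 0 := fun y => t.zero_of_isLE_of_isGE y 0 1 (by lia) hP.1 ⟨hY⟩
  have h₁ : (c ≫ δ' ≫ u⟦(1 : ℤ)⟧') ≫ f⟦(1 : ℤ)⟧' = 0 := by
    have hδ' : δ' ≫ (u ≫ f)⟦(1 : ℤ)⟧' = 0 := comp_distTriang_mor_zero₃₁ _ hTC
    rw [Functor.map_comp] at hδ'
    simp only [assoc, hδ', comp_zero]
  have h₂ : (c ≫ δ') ≫ u⟦(1 : ℤ)⟧' = 0 :=
    (assoc _ _ _).trans (distTriang_eq_zero_of_comp_shift_mor₁ hTA hPY h₁)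
  obtain ⟨a, rfl⟩ : ∃ a : P ⟶ A, c = a ≫ γ := Triangle.coyoneda_exact₃ _ hTC c
    (distTriang_eq_zero_of_comp_shift_mor₁ hTK (hP.2 F' hF') h₂)
  obtain ⟨x, rfl⟩ : ∃ x : P ⟶ X, a = x ≫ f := Triangle.coyoneda_exact₂ _ hTA a (hPY _)
  obtain ⟨k, rfl⟩ : ∃ k : P ⟶ K, x = k ≫ u :=
    Triangle.coyoneda_exact₂ _ hTK x (hP.2 F' hF' _)
  have hufγ : (u ≫ f) ≫ γ = 0 := comp_distTriang_mor_zero₁₂ _ hTC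
  rw [assoc, assoc, ← assoc u, hufγ, comp_zero]

lemma tiltAisle_inter_isGE (hm : 0 ≤ m) (hTF : IsTorsionPairIn C (t.extendedHeart m) T F) :
    t.tiltAisle F ∩ {X | t.IsGE X (1 - m)} = T := by
  refine Set.Subset.antisymm ?_ fun P hP => ⟨t.torsion_subset_tiltAisle hTF hP, (hTF.subT hP).1⟩
  rintro W ⟨hW, hWG : t.IsGE W (1 - m)⟩
  obtain ⟨X, W', p, q, r, hX, hW', hTr⟩ := t.tiltAisle_subset_starSet hm hTF hW
  exact hTF.mem_torsion_of_mor₁_eq_zero hTr hW' ⟨hWG, hW.1⟩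
    (t.zero_of_isLE_of_isGE p (-m) (1 - m) (by lia) hX hWG)

lemma rightOrth_tiltAisle_inter_isLE (hm : 0 ≤ m)
    (hTF : IsTorsionPairIn C (t.extendedHeart m) T F) :
    rightOrth (t.tiltAisle F) ∩ {X | t.IsLE X 0} = F := by
  refine Set.Subset.antisymm ?_
    fun Z hZ => ⟨t.torsionFree_subset_rightOrth_tiltAisle hZ, (hTF.subF hZ).2⟩
  rintro Z ⟨hZ, hZL : t.IsLE Z 0⟩
  obtain ⟨X, Y, f, g, h, hX, hY, hTr⟩ := t.mem_starSet_of_isGE_of_torsion_orth hm hTF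
    (t.isGE_of_mem_rightOrth_tiltAisle hm hTF hZ)
    (fun P hP => hZ P (t.torsion_subset_tiltAisle hTF hP))
  exact hTF.mem_torsionFree_of_mor₂_eq_zero hTr hX
    ⟨t.isGE_of_mem_rightOrth_tiltAisle hm hTF hZ, hZL⟩
    (t.zero_of_isLE_of_isGE g 0 1 (by lia) hZL hY)

theorem tilt_isTStructure_and_restriction_eq (hm : 0 ≤ m)
    (hTF : IsSTorsionPairIn C (t.extendedHeart m) T F) :
    IsTStructure C (starSet C {X | t.IsLE X (-m)} T)
      (starSet C (shiftSet C F 1) {X | t.IsGE X 0}) ∧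
    {X | t.IsLE X (-m)} ⊆ starSet C {X | t.IsLE X (-m)} T ∧
    starSet C {X | t.IsLE X (-m)} T ⊆ {X | t.IsLE X 0} ∧
    starSet C {X | t.IsLE X (-m)} T ∩ {X | t.IsGE X (1 - m)} = T ∧
    shiftSet C (starSet C (shiftSet C F 1) {X | t.IsGE X 0}) (-1) ∩ {X | t.IsLE X 0} = F := by
  have hTF' := hTF.toIsTorsionPairIn
  rw [t.starSet_eq_tiltAisle hm hTF', t.starSet_shift_torsionFree_eq hm hTF', shiftSet_shiftSet,
    add_neg_cancel, shiftSet_zero (rightOrth_isoClosed _)]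
  exact ⟨isTStructure_of_aisle (t.tiltAisle_isoClosed F) (fun _ => t.shift_mem_tiltAisle hm hTF)
      (t.mem_starSet_tiltAisle_rightOrth hm hTF'),
    t.isLE_neg_subset_tiltAisle hm hTF', fun _ hW => hW.1, t.tiltAisle_inter_isGE hm hTF',
    t.rightOrth_tiltAisle_inter_isLE hm hTF'⟩

end Tilt

end CategoryTheory.Triangulated.TStructure

/-- Proposition 4.1: for a `t`-structure `𝒰 = (L, G)` on `D` and
`m ≥ 1`, with `m`-extended heart `m-ℋ = U^{≥-(m-1)} ∩ U^{≤0} = G[m-1] ∩ L`, the maps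
`φ(V^{≤0},V^{≥0}) = (V^{≤0} ∩ U^{≥-(m-1)}, V^{≥1} ∩ U^{≤0})` and
`ψ(𝒯,ℱ) = (U^{≤-m} * 𝒯, ℱ[1] * U^{≥0})` are mutually inverse, order preserving
bijections between `t`-structures on `D` with `U^{≤-m} ⊆ V^{≤0} ⊆ U^{≤0}` and
`s`-torsion pairs in `m-ℋ`. -/
theorem stmt7 (L G : Set D) (hU : IsTStructure D L G) (m : ℤ) (hm : 1 ≤ m)
    (H : Set D) (hH : H = shiftSet D G (m - 1) ∩ L) :
    -- φ is well defined and ψ ∘ φ = id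
    (∀ L' G', IsTStructure D L' G' → shiftSet D L m ⊆ L' → L' ⊆ L →
       IsSTorsionPairIn D H (L' ∩ shiftSet D G (m - 1)) (shiftSet D G' (-1) ∩ L) ∧
       starSet D (shiftSet D L m) (L' ∩ shiftSet D G (m - 1)) = L' ∧
       starSet D (shiftSet D (shiftSet D G' (-1) ∩ L) 1) G = G') ∧
    -- ψ is well defined and φ ∘ ψ = id
    (∀ T F, IsSTorsionPairIn D H T F →
       IsTStructure D (starSet D (shiftSet D L m) T) (starSet D (shiftSet D F 1) G) ∧
       shiftSet D L m ⊆ starSet D (shiftSet D L m) T ∧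
       starSet D (shiftSet D L m) T ⊆ L ∧
       starSet D (shiftSet D L m) T ∩ shiftSet D G (m - 1) = T ∧
       shiftSet D (starSet D (shiftSet D F 1) G) (-1) ∩ L = F) ∧
    -- φ preserves the orders (inclusion of aisles to inclusion of torsion classes)
    (∀ L' G' L'' G'', IsTStructure D L' G' → IsTStructure D L'' G'' →
       shiftSet D L m ⊆ L' → L' ⊆ L → shiftSet D L m ⊆ L'' → L'' ⊆ L → L' ⊆ L'' →
       L' ∩ shiftSet D G (m - 1) ⊆ L'' ∩ shiftSet D G (m - 1)) ∧
    -- ψ preserves the orders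
    (∀ T F T' F', IsSTorsionPairIn D H T F → IsSTorsionPairIn D H T' F' → T ⊆ T' →
       starSet D (shiftSet D L m) T ⊆ starSet D (shiftSet D L m) T') := by
  subst hH
  obtain ⟨t, rfl, rfl⟩ := hU.exists_tStructure
  simp only [t.shiftSet_setOf_isLE, t.shiftSet_setOf_isGE, zero_sub, neg_sub]
  refine ⟨fun L' G' hV h₁ h₂ => ?_,
    fun T F hTF => t.tilt_isTStructure_and_restriction_eq (by lia) hTF,
    fun _ _ _ _ _ _ _ _ _ _ h => Set.inter_subset_inter_left _ h,
    fun _ _ _ _ _ _ h => starSet_mono_right h⟩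
  obtain ⟨t', rfl, rfl⟩ := hV.exists_tStructure
  simp only [t'.shiftSet_setOf_isGE, zero_sub, neg_neg]
  exact ⟨TStructure.isSTorsionPairIn_of_le h₁ h₂, TStructure.starSet_isLE_inter_isGE_eq h₁,
    TStructure.starSet_shift_isGE_inter_isLE_eq h₂⟩
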